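/- arXiv:2010.09819 — 2 statements merged into one kernel-verified Lean document; each statement's English description precedes it below -/
import Mathlib

section
/- If h : ℝⁿ → ℝ is continuously differentiable, x : ℝ≥0 → ℝⁿ is a differentiable solution curve satisfying (d/dt) h(x(t)) ≥ -α·h(x(t)) for all t ≥ 0 with α > 0, and h(x(0)) ≥ 0, then h(x(t)) ≥ 0 for all t ≥ 0 (forward invariance of the safe set). -/
/-! Multiplying by the integrating factor `exp (α t)` turns `g' ≥ -α g` into
`(exp (α t) * g t)' ≥ 0`, so `exp (α t) * g t` is nondecreasing and stays above its
initial value. -/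

open Real Set

section IntegratingFactor

variable {g : ℝ → ℝ} {α a : ℝ}

theorem hasDerivAt_exp_mul_mul {g' t : ℝ} (hg : HasDerivAt g g' t) :
    HasDerivAt (fun s => exp (α * s) * g s) (exp (α * t) * (g' + α * g t)) t := by
  have hexp : HasDerivAt (fun s => exp (α * s)) (exp (α * t) * α) t := by
    simpa using ((hasDerivAt_id t).const_mul α).exp
  exact (hexp.mul hg).congr_deriv (by ring)

theorem monotoneOn_exp_mul_of_deriv_ge (hg : Differentiable ℝ g)
    (hineq : ∀ t ≥ a, -α * g t ≤ deriv g t) :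
    MonotoneOn (fun t => exp (α * t) * g t) (Ici a) := by
  have hderiv : ∀ t, HasDerivAt (fun s => exp (α * s) * g s)
      (exp (α * t) * (deriv g t + α * g t)) t :=
    fun t => hasDerivAt_exp_mul_mul (hg t).hasDerivAt
  refine monotoneOn_of_deriv_nonneg (convex_Ici a)
    (fun t _ => (hderiv t).continuousAt.continuousWithinAt)
    (fun t _ => (hderiv t).differentiableAt.differentiableWithinAt) fun t ht => ?_
  rw [interior_Ici] at ht
  rw [(hderiv t).deriv]
  have := hineq t ht.le
  exact mul_nonneg (exp_pos _).le (by linarith)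

theorem nonneg_of_deriv_ge_neg_mul (hg : Differentiable ℝ g)
    (hineq : ∀ t ≥ a, -α * g t ≤ deriv g t) (ha : 0 ≤ g a) {t : ℝ} (ht : a ≤ t) :
    0 ≤ g t := by
  have hmono : exp (α * a) * g a ≤ exp (α * t) * g t :=
    monotoneOn_exp_mul_of_deriv_ge hg hineq self_mem_Ici ht ht
  have : 0 ≤ exp (α * t) * g t := le_trans (mul_nonneg (exp_pos _).le ha) hmono
  exact nonneg_of_mul_nonneg_right this (exp_pos _)

end IntegratingFactor

theorem stmt_0_general {n : ℕ} (h : EuclideanSpace ℝ (Fin n) → ℝ) (hh : ContDiff ℝ 1 h)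
    (x : ℝ → EuclideanSpace ℝ (Fin n)) (hx : Differentiable ℝ x)
    (α : ℝ)
    (hineq : ∀ t ≥ (0:ℝ), deriv (fun s => h (x s)) t ≥ -α * h (x t))
    (h0 : h (x 0) ≥ 0) :
    ∀ t ≥ (0:ℝ), h (x t) ≥ 0 :=
  fun _ ht => nonneg_of_deriv_ge_neg_mul ((hh.differentiable one_ne_zero).comp hx) hineq h0 ht

/-- Forward invariance of the safe set `{x | h x ≥ 0}` under the barrier
differential inequality `(d/dt) h(x(t)) ≥ -α h(x(t))`. -/
theorem stmt_0 {n : ℕ} (h : EuclideanSpace ℝ (Fin n) → ℝ) (hh : ContDiff ℝ 1 h)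
    (x : ℝ → EuclideanSpace ℝ (Fin n)) (hx : Differentiable ℝ x)
    (α : ℝ) (hα : 0 < α)
    (hineq : ∀ t ≥ (0:ℝ), deriv (fun s => h (x s)) t ≥ -α * h (x t))
    (h0 : h (x 0) ≥ 0) :
    ∀ t ≥ (0:ℝ), h (x t) ≥ 0 :=
  stmt_0_general h hh x hx α hineq h0
end

section
/- Suppose U_rep is C¹ on the open set D = {‖x - x_obst‖ > D_obst} and U_rep(x) → ∞ as ‖x - x_obst‖ → D_obst⁺. If x : [0,T) → D is a solution of ẋ = -∇U_att(x) - ∇U_rep(x) with initial potential U(x(0)) = C < ∞ and U_att ≥ 0, then U_rep(x(t)) ≤ C for all t, and therefore the trajectory stays a positive distance away from the obstacle boundary: there exists ε > 0 with ‖x(t) - x_obst‖ ≥ D_obst + ε for all t ∈ [0,T). -/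
/-!
Along the flow `ẋ = -∇U`, with `U = U_att + U_rep`, the chain rule gives
`d/dt U(x t) = -‖∇U(x t)‖² ≤ 0`, so `U(x t) ≤ U(x 0) = C`. Since `U_att ≥ 0` this bounds
`U_rep(x t)` by `C`, and the blow-up of `U_rep` at the obstacle boundary turns that bound into
a uniform distance from it.
-/

open Set

section GradientFlow

variable {E : Type*} [NormedAddCommGroup E] [InnerProductSpace ℝ E] [CompleteSpace E]

theorem HasGradientAt.add {f h : E → ℝ} {f' h' x : E} (hf : HasGradientAt f f' x)
    (hh : HasGradientAt h h' x) : HasGradientAt (f + h) (f' + h') x := by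
  rw [hasGradientAt_iff_hasFDerivAt, map_add]
  exact hf.hasFDerivAt.add hh.hasFDerivAt

theorem HasGradientAt.hasDerivAt_comp_of_hasDerivAt_neg {U : E → ℝ} {g : E} {γ : ℝ → E} {t : ℝ}
    (hU : HasGradientAt U g (γ t)) (hγ : HasDerivAt γ (-g) t) :
    HasDerivAt (U ∘ γ) (-‖g‖ ^ 2) t := by
  refine (hU.hasFDerivAt.comp_hasDerivAt t hγ).congr_deriv ?_
  simp [InnerProductSpace.toDual_apply_apply]

theorem antitoneOn_comp_of_gradientFlow {U : E → ℝ} {g : ℝ → E} {γ : ℝ → E} {D : Set ℝ}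
    (hD : Convex ℝ D) (hU : ∀ t ∈ D, HasGradientAt U (g t) (γ t))
    (hγ : ∀ t ∈ D, HasDerivAt γ (-g t) t) :
    AntitoneOn (U ∘ γ) D := by
  have hderiv : ∀ t ∈ D, HasDerivAt (U ∘ γ) (-‖g t‖ ^ 2) t := fun t ht =>
    (hU t ht).hasDerivAt_comp_of_hasDerivAt_neg (hγ t ht)
  refine antitoneOn_of_hasDerivWithinAt_nonpos hD
    (fun t ht => (hderiv t ht).continuousAt.continuousWithinAt)
    (fun t ht => (hderiv t (interior_subset ht)).hasDerivWithinAt) fun t _ => ?_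
  simp only [Left.neg_nonpos_iff]
  positivity

end GradientFlow

theorem stmt_13_general {n : ℕ} (Uatt Urep : EuclideanSpace ℝ (Fin n) → ℝ)
    (xobst : EuclideanSpace ℝ (Fin n)) (Dobst : ℝ)
    (hattC1 : ContDiff ℝ 1 Uatt) (hattnn : ∀ x, 0 ≤ Uatt x)
    (hrepC1 : ContDiffOn ℝ 1 Urep {x | Dobst < ‖x - xobst‖})
    (hblow : ∀ M : ℝ, ∃ ε > (0:ℝ), ∀ x, Dobst < ‖x - xobst‖ →
      ‖x - xobst‖ < Dobst + ε → Urep x > M)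
    (T : ℝ) (x : ℝ → EuclideanSpace ℝ (Fin n))
    (hdom : ∀ t ∈ Set.Ico (0:ℝ) T, Dobst < ‖x t - xobst‖)
    (hode : ∀ t ∈ Set.Ico (0:ℝ) T,
      HasDerivAt x (-(gradient Uatt (x t)) - gradient Urep (x t)) t)
    (C : ℝ) (hC : Uatt (x 0) + Urep (x 0) = C) :
    (∀ t ∈ Set.Ico (0:ℝ) T, Urep (x t) ≤ C) ∧
    ∃ ε > (0:ℝ), ∀ t ∈ Set.Ico (0:ℝ) T, Dobst + ε ≤ ‖x t - xobst‖ := by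
  have hopen : IsOpen {y : EuclideanSpace ℝ (Fin n) | Dobst < ‖y - xobst‖} :=
    isOpen_lt continuous_const (by fun_prop)
  have hgrad : ∀ t ∈ Ico (0:ℝ) T, HasGradientAt (Uatt + Urep)
      (gradient Uatt (x t) + gradient Urep (x t)) (x t) := fun t ht =>
    (hattC1.differentiable one_ne_zero (x t)).hasGradientAt.add
      ((hrepC1.differentiableOn one_ne_zero).differentiableAt
        (hopen.mem_nhds (hdom t ht))).hasGradientAt
  have hanti := antitoneOn_comp_of_gradientFlow (convex_Ico 0 T) hgrad
    fun t ht => by simpa only [neg_add'] using hode t ht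
  have hbound : ∀ t ∈ Ico (0:ℝ) T, Urep (x t) ≤ C := fun t ht => by
    have hdecay : Uatt (x t) + Urep (x t) ≤ C :=
      hC ▸ hanti ⟨le_rfl, ht.1.trans_lt ht.2⟩ ht ht.1
    linarith [hattnn (x t)]
  obtain ⟨ε, hε, hnear⟩ := hblow C
  exact ⟨hbound, ε, hε, fun t ht =>
    not_lt.mp fun hlt => (hnear _ (hdom t ht) hlt).not_ge (hbound t ht)⟩

/-- Safety of the APF gradient flow: along `ẋ = -∇U_att(x) - ∇U_rep(x)` starting with
total potential `C`, the repulsive potential stays bounded by `C`, and the trajectory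
stays a positive distance from the obstacle boundary. -/
theorem stmt_13 {n : ℕ} (Uatt Urep : EuclideanSpace ℝ (Fin n) → ℝ)
    (xobst : EuclideanSpace ℝ (Fin n)) (Dobst : ℝ) (hD : 0 < Dobst)
    (hattC1 : ContDiff ℝ 1 Uatt) (hattnn : ∀ x, 0 ≤ Uatt x)
    (hrepC1 : ContDiffOn ℝ 1 Urep {x | Dobst < ‖x - xobst‖})
    (hrepnn : ∀ x, Dobst < ‖x - xobst‖ → 0 ≤ Urep x)
    (hblow : ∀ M : ℝ, ∃ ε > (0:ℝ), ∀ x, Dobst < ‖x - xobst‖ →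
      ‖x - xobst‖ < Dobst + ε → Urep x > M)
    (T : ℝ) (x : ℝ → EuclideanSpace ℝ (Fin n))
    (hdom : ∀ t ∈ Set.Ico (0:ℝ) T, Dobst < ‖x t - xobst‖)
    (hode : ∀ t ∈ Set.Ico (0:ℝ) T,
      HasDerivAt x (-(gradient Uatt (x t)) - gradient Urep (x t)) t)
    (C : ℝ) (hC : Uatt (x 0) + Urep (x 0) = C) :
    (∀ t ∈ Set.Ico (0:ℝ) T, Urep (x t) ≤ C) ∧
    ∃ ε > (0:ℝ), ∀ t ∈ Set.Ico (0:ℝ) T, Dobst + ε ≤ ‖x t - xobst‖ :=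
  stmt_13_general Uatt Urep xobst Dobst hattC1 hattnn hrepC1 hblow T x hdom hode C hC
end
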